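/- arXiv:1812.06790 — 8 statements merged into one kernel-verified Lean document; each statement's English description precedes it below -/
import Mathlib

section
/- Friendship paradox, first-order stochastic dominance version: For a finite simple undirected graph G=(V,E) in which every vertex has degree at least 1, the degree d(Z) of a uniformly random neighbor Z of a uniformly random vertex first-order stochastically dominates the degree d(X) of a uniformly random vertex X. Explicitly, for every natural number a, (1/M) ∑_{v∈V} |{u ∈ N(v) : d(u) ≤ a}| / d(v) ≤ |{v ∈ V : d(v) ≤ a}| / M. -/
open Finset

/-- **Friendship paradox, first-order stochastic dominance version.** For a finite simple
undirected graph in which every vertex has degree at least 1, the degree of a uniformly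
random neighbor `Z` of a uniformly random vertex first-order stochastically dominates the
degree of a uniformly random vertex `X`: for every `a`,
`(1/M) ∑_v |{u ∈ N(v) : d(u) ≤ a}|/d(v) ≤ |{v : d(v) ≤ a}|/M`. -/
theorem friendship_paradox_fosd {V : Type*} [Fintype V] [DecidableEq V]
    (G : SimpleGraph V) [DecidableRel G.Adj] (hdeg : ∀ v, 1 ≤ G.degree v) (a : ℕ) :
    (1 / (Fintype.card V : ℝ)) *
        ∑ v, (((G.neighborFinset v).filter fun u => G.degree u ≤ a).card : ℝ)
          / (G.degree v : ℝ)
      ≤ ((univ.filter fun v => G.degree v ≤ a).card : ℝ) / (Fintype.card V : ℝ) := by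
  classical
  have hd : ∀ v : V, (0:ℝ) < (G.degree v : ℝ) := fun v => by
    exact_mod_cast Nat.lt_of_lt_of_le Nat.zero_lt_one (hdeg v)
  have key : ∑ v, (((G.neighborFinset v).filter fun u => G.degree u ≤ a).card : ℝ)
          / (G.degree v : ℝ)
      ≤ ((univ.filter fun v => G.degree v ≤ a).card : ℝ) := by
    have step1 : ∀ v : V, (((G.neighborFinset v).filter fun u => G.degree u ≤ a).card : ℝ)
          / (G.degree v : ℝ)
        = ∑ u : V, if G.Adj v u ∧ G.degree u ≤ a then 1 / (G.degree v : ℝ) else 0 := by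
      intro v
      rw [Finset.card_filter]
      push_cast
      rw [Finset.sum_div]
      rw [SimpleGraph.neighborFinset_eq_filter, Finset.sum_filter]
      apply Finset.sum_congr rfl
      intro u _
      by_cases h1 : G.Adj v u <;> by_cases h2 : G.degree u ≤ a <;>
        simp [h1, h2, one_div]
    calc ∑ v, (((G.neighborFinset v).filter fun u => G.degree u ≤ a).card : ℝ)
          / (G.degree v : ℝ)
        = ∑ v : V, ∑ u : V, if G.Adj v u ∧ G.degree u ≤ a then 1 / (G.degree v : ℝ) else 0 :=
          Finset.sum_congr rfl fun v _ => step1 v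
      _ = (∑ v : V, ∑ u : V, if G.Adj v u ∧ G.degree u ≤ a ∧ G.degree v ≤ a
              then 1 / (G.degree v : ℝ) else 0)
          + ∑ v : V, ∑ u : V, if G.Adj v u ∧ G.degree u ≤ a ∧ ¬ G.degree v ≤ a
              then 1 / (G.degree v : ℝ) else 0 := by
          rw [← Finset.sum_add_distrib]
          apply Finset.sum_congr rfl; intro v _
          rw [← Finset.sum_add_distrib]
          apply Finset.sum_congr rfl; intro u _
          by_cases h1 : G.Adj v u <;> by_cases h2 : G.degree u ≤ a <;>
            by_cases h3 : G.degree v ≤ a <;> simp [h1, h2, h3]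
      _ ≤ (∑ v : V, ∑ u : V, if G.Adj v u ∧ G.degree u ≤ a ∧ G.degree v ≤ a
              then 1 / (G.degree u : ℝ) else 0)
          + ∑ v : V, ∑ u : V, if G.Adj v u ∧ G.degree u ≤ a ∧ ¬ G.degree v ≤ a
              then 1 / (G.degree u : ℝ) else 0 := by
          apply add_le_add
          · -- symmetrization: equality
            apply le_of_eq
            rw [Finset.sum_comm]
            apply Finset.sum_congr rfl; intro v _
            apply Finset.sum_congr rfl; intro u _
            split_ifs with h1 h2 h2
            · rfl
            · exact absurd ⟨h1.1.symm, h1.2.2, h1.2.1⟩ h2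
            · exact absurd ⟨h2.1.symm, h2.2.2, h2.2.1⟩ h1
            · rfl
          · apply Finset.sum_le_sum; intro v _
            apply Finset.sum_le_sum; intro u _
            split_ifs with h
            · obtain ⟨hadj, hu, hv⟩ := h
              apply one_div_le_one_div_of_le (hd u)
              exact_mod_cast le_of_lt (Nat.lt_of_le_of_lt hu (Nat.lt_of_not_le hv))
            · exact le_rfl
      _ = ∑ v : V, ∑ u : V, if G.Adj v u ∧ G.degree u ≤ a
              then 1 / (G.degree u : ℝ) else 0 := by
          rw [← Finset.sum_add_distrib]
          apply Finset.sum_congr rfl; intro v _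
          rw [← Finset.sum_add_distrib]
          apply Finset.sum_congr rfl; intro u _
          by_cases h1 : G.Adj v u <;> by_cases h2 : G.degree u ≤ a <;>
            by_cases h3 : G.degree v ≤ a <;> simp [h1, h2, h3]
      _ = ∑ u : V, ∑ v : V, if G.Adj v u ∧ G.degree u ≤ a
              then 1 / (G.degree u : ℝ) else 0 := Finset.sum_comm
      _ = ∑ u : V, if G.degree u ≤ a then 1 else 0 := by
          apply Finset.sum_congr rfl; intro u _
          by_cases h2 : G.degree u ≤ a
          · simp only [h2, and_true, if_true]
            rw [← Finset.sum_filter]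
            have hset : univ.filter (fun v => G.Adj v u) = G.neighborFinset u := by
              ext v; simp [SimpleGraph.adj_comm]
            rw [hset, Finset.sum_const, SimpleGraph.card_neighborFinset_eq_degree,
              nsmul_eq_mul, mul_one_div_cancel (ne_of_gt (hd u))]
          · simp [h2]
      _ = ((univ.filter fun v => G.degree v ≤ a).card : ℝ) := by
          rw [Finset.card_filter]; push_cast; rfl
  rcases eq_or_ne (Fintype.card V) 0 with h | h
  · simp [h]
  · have hM : (0:ℝ) < (Fintype.card V : ℝ) := by
      exact_mod_cast Nat.pos_of_ne_zero h
    rw [one_div, inv_mul_eq_div]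
    gcongr
end

section
/- Harmonic friendship paradox for random friends of random nodes: For a finite simple undirected graph G=(V,E) in which every vertex has degree at least 1, the expected reciprocal degree of a uniformly random neighbor Z of a uniformly random vertex is at most the expected reciprocal degree of a uniformly random vertex; explicitly, ∑_{v∈V} (1/d(v)) ∑_{u∈N(v)} 1/d(u) ≤ ∑_{v∈V} 1/d(v). -/
lemma hfp_sym {V : Type*} [Fintype V] (G : SimpleGraph V) [DecidableRel G.Adj]
    (g : V → V → ℝ) :
    ∑ v, ∑ u ∈ G.neighborFinset v, g v u = ∑ v, ∑ u ∈ G.neighborFinset v, g u v := by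
  have h : ∀ (f : V → V → ℝ), ∑ v, ∑ u ∈ G.neighborFinset v, f v u
      = ∑ v, ∑ u, if G.Adj v u then f v u else 0 := by
    intro f
    refine Finset.sum_congr rfl fun v _ => ?_
    rw [← Finset.sum_filter]
    exact Finset.sum_congr (by ext u; simp [SimpleGraph.mem_neighborFinset]) (fun _ _ => rfl)
  rw [h, h (fun v u => g u v), Finset.sum_comm]
  refine Finset.sum_congr rfl fun v _ => Finset.sum_congr rfl fun u _ => ?_
  simp [G.adj_comm]

/-- **Harmonic friendship paradox.** For a finite simple undirected graph in which every
vertex has degree at least 1, the expected reciprocal degree of a uniformly random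
neighbor `Z` of a uniformly random vertex is at most the expected reciprocal degree of a
uniformly random vertex:
`∑_v (1/d(v)) ∑_{u∈N(v)} 1/d(u) ≤ ∑_v 1/d(v)`. -/
theorem harmonic_friendship_paradox {V : Type*} [Fintype V]
    (G : SimpleGraph V) [DecidableRel G.Adj] (hdeg : ∀ v, 1 ≤ G.degree v) :
    ∑ v, (1 / (G.degree v : ℝ)) * ∑ u ∈ G.neighborFinset v, (1 / (G.degree u : ℝ))
      ≤ ∑ v, (1 / (G.degree v : ℝ)) := by
  have hd : ∀ v, (0:ℝ) < (G.degree v : ℝ) := fun v => by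
    exact_mod_cast hdeg v
  have hL : ∑ v, (1 / (G.degree v : ℝ)) * ∑ u ∈ G.neighborFinset v, (1 / (G.degree u : ℝ))
      = ∑ v, ∑ u ∈ G.neighborFinset v, (1 / (G.degree v : ℝ)) * (1 / (G.degree u : ℝ)) := by
    refine Finset.sum_congr rfl fun v _ => ?_
    rw [Finset.mul_sum]
  have hR : ∑ v, ∑ u ∈ G.neighborFinset v,
      (1 / (G.degree v : ℝ)) * (1 / (G.degree v : ℝ)) = ∑ v, (1 / (G.degree v : ℝ)) := by
    refine Finset.sum_congr rfl fun v _ => ?_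
    rw [Finset.sum_const, G.card_neighborFinset_eq_degree, nsmul_eq_mul]
    field_simp
  rw [hL, ← hR]
  -- double the inequality
  have hsym : ∑ v, ∑ u ∈ G.neighborFinset v,
      (1 / (G.degree u : ℝ)) * (1 / (G.degree u : ℝ))
      = ∑ v, ∑ u ∈ G.neighborFinset v,
      (1 / (G.degree v : ℝ)) * (1 / (G.degree v : ℝ)) :=
    hfp_sym G (fun v u => (1 / (G.degree u : ℝ)) * (1 / (G.degree u : ℝ)))
  have h2 : 2 * ∑ v, ∑ u ∈ G.neighborFinset v,
      (1 / (G.degree v : ℝ)) * (1 / (G.degree u : ℝ))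
      ≤ 2 * ∑ v, ∑ u ∈ G.neighborFinset v,
      (1 / (G.degree v : ℝ)) * (1 / (G.degree v : ℝ)) := by
    calc 2 * ∑ v, ∑ u ∈ G.neighborFinset v,
          (1 / (G.degree v : ℝ)) * (1 / (G.degree u : ℝ))
        = ∑ v, ∑ u ∈ G.neighborFinset v,
          2 * ((1 / (G.degree v : ℝ)) * (1 / (G.degree u : ℝ))) := by
          rw [Finset.mul_sum]; exact Finset.sum_congr rfl fun v _ => Finset.mul_sum _ _ _
      _ ≤ ∑ v, ∑ u ∈ G.neighborFinset v,
          ((1 / (G.degree v : ℝ)) * (1 / (G.degree v : ℝ))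
            + (1 / (G.degree u : ℝ)) * (1 / (G.degree u : ℝ))) := by
          refine Finset.sum_le_sum fun v _ => Finset.sum_le_sum fun u _ => ?_
          nlinarith [sq_nonneg ((1 / (G.degree v : ℝ)) - (1 / (G.degree u : ℝ)))]
      _ = 2 * ∑ v, ∑ u ∈ G.neighborFinset v,
          (1 / (G.degree v : ℝ)) * (1 / (G.degree v : ℝ)) := by
          rw [Finset.sum_congr rfl fun v _ => Finset.sum_add_distrib,
            Finset.sum_add_distrib, hsym]; ring
  linarith
end

section
/- Critical threshold for the SIS mean-field dynamics under non-monophilic (one-hop) contagion: Let D ≥ 1 be a natural number, let P be a probability distribution on {1,…,D} (P(k) ≥ 0, ∑_{k=1}^D P(k) = 1), and let λ > 0. Then there exists θ ∈ (0,1] satisfying the stationarity equation θ = ∑_{k=1}^D P(k) · (λ k θ)/(λ k θ + D) if and only if λ · ∑_{k=1}^D k P(k) > D, i.e., if and only if the effective spreading rate λ exceeds the critical threshold λ*_X = D / E{d(X)}. -/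
open Finset

/-- **Critical threshold for the SIS mean-field dynamics under non-monophilic (one-hop)
contagion.** Let `D ≥ 1`, let `P` be a probability distribution on `{1,…,D}` and `λ > 0`.
There exists `θ ∈ (0,1]` satisfying the stationarity equation
`θ = ∑_{k=1}^D P(k)·(λkθ)/(λkθ + D)` if and only if `λ·∑_{k=1}^D k P(k) > D`, i.e. iff
the effective spreading rate exceeds the critical threshold `λ*_X = D / E{d(X)}`. -/
theorem sis_critical_threshold_one_hop (D : ℕ) (hD : 1 ≤ D) (P : ℕ → ℝ)
    (hP : ∀ k ∈ Finset.Icc 1 D, 0 ≤ P k) (hPsum : ∑ k ∈ Finset.Icc 1 D, P k = 1)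
    (lam : ℝ) (hlam : 0 < lam) :
    (∃ θ : ℝ, 0 < θ ∧ θ ≤ 1 ∧
        θ = ∑ k ∈ Finset.Icc 1 D, P k * (lam * k * θ) / (lam * k * θ + D))
      ↔ (D : ℝ) < lam * ∑ k ∈ Finset.Icc 1 D, (k : ℝ) * P k := by
  have hD0 : (0:ℝ) < D := by exact_mod_cast hD
  obtain ⟨k0, hk0S, hk0⟩ : ∃ k ∈ Finset.Icc 1 D, P k ≠ 0 := by
    by_contra h
    push_neg at h
    have : ∑ k ∈ Finset.Icc 1 D, P k = 0 := Finset.sum_eq_zero h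
    rw [this] at hPsum; norm_num at hPsum
  have hk0pos : 0 < P k0 := lt_of_le_of_ne (hP k0 hk0S) (Ne.symm hk0)
  have hk01 : 1 ≤ k0 := (Finset.mem_Icc.mp hk0S).1
  have hk0r : (1:ℝ) ≤ (k0:ℝ) := by exact_mod_cast hk01
  have hk0r0 : (0:ℝ) < (k0:ℝ) := lt_of_lt_of_le one_pos hk0r
  constructor
  · rintro ⟨θ, hθ0, hθ1, heq⟩
    have hden : ∀ k ∈ Finset.Icc 1 D, 0 < lam * k * θ + D := by
      intro k hk
      have hk1 : (1:ℝ) ≤ (k:ℝ) := by exact_mod_cast (Finset.mem_Icc.mp hk).1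
      have := mul_pos (mul_pos hlam (lt_of_lt_of_le one_pos hk1)) hθ0
      linarith
    have hsum : ∑ k ∈ Finset.Icc 1 D, P k * (lam * k * θ) / (lam * k * θ + D)
        = θ * ∑ k ∈ Finset.Icc 1 D, P k * (lam * k) / (lam * k * θ + D) := by
      rw [Finset.mul_sum]
      apply Finset.sum_congr rfl
      intro k hk
      have hd := ne_of_gt (hden k hk)
      field_simp
    have h1 : (1:ℝ) = ∑ k ∈ Finset.Icc 1 D, P k * (lam * k) / (lam * k * θ + D) := by
      rw [hsum] at heq
      have := mul_left_cancel₀ (ne_of_gt hθ0)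
        (by linarith : θ * 1 = θ * ∑ k ∈ Finset.Icc 1 D, P k * (lam * k) / (lam * k * θ + D))
      linarith
    have h2 : (1:ℝ) < ∑ k ∈ Finset.Icc 1 D, P k * (lam * k) / D := by
      rw [h1]
      apply Finset.sum_lt_sum
      · intro k hk
        have hk1 : (1:ℝ) ≤ (k:ℝ) := by exact_mod_cast (Finset.mem_Icc.mp hk).1
        have hkr0 : (0:ℝ) < (k:ℝ) := lt_of_lt_of_le one_pos hk1
        have hnum : 0 ≤ P k * (lam * k) := mul_nonneg (hP k hk) (le_of_lt (mul_pos hlam hkr0))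
        apply div_le_div_of_nonneg_left hnum hD0
        have := mul_pos (mul_pos hlam hkr0) hθ0
        linarith
      · refine ⟨k0, hk0S, ?_⟩
        have hnum : 0 < P k0 * (lam * k0) := mul_pos hk0pos (mul_pos hlam hk0r0)
        apply div_lt_div_of_pos_left hnum hD0
        have := mul_pos (mul_pos hlam hk0r0) hθ0
        linarith
    have h3 : ∑ k ∈ Finset.Icc 1 D, P k * (lam * k) / D
        = lam * (∑ k ∈ Finset.Icc 1 D, (k:ℝ) * P k) / D := by
      rw [Finset.mul_sum, Finset.sum_div]
      apply Finset.sum_congr rfl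
      intro k hk; ring
    rw [h3] at h2
    rw [lt_div_iff₀ hD0] at h2
    linarith
  · intro hsup
    set G : ℝ → ℝ := fun θ => ∑ k ∈ Finset.Icc 1 D, P k * (lam * k) / (lam * k * θ + D) with hG
    have hdenpos : ∀ x ∈ Set.Icc (0:ℝ) 1, ∀ k ∈ Finset.Icc 1 D, 0 < lam * k * x + D := by
      intro x hx k hk
      have hk1 : (1:ℝ) ≤ (k:ℝ) := by exact_mod_cast (Finset.mem_Icc.mp hk).1
      have hkr0 : (0:ℝ) < (k:ℝ) := lt_of_lt_of_le one_pos hk1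
      have : 0 ≤ lam * k * x := mul_nonneg (le_of_lt (mul_pos hlam hkr0)) hx.1
      linarith
    have hcont : ContinuousOn G (Set.Icc 0 1) := by
      apply continuousOn_finset_sum
      intro k hk
      apply ContinuousOn.div continuousOn_const (by fun_prop)
      intro x hx
      exact ne_of_gt (hdenpos x hx k hk)
    have hG0 : 1 < G 0 := by
      have : G 0 = lam * (∑ k ∈ Finset.Icc 1 D, (k:ℝ) * P k) / D := by
        simp only [hG]
        rw [Finset.mul_sum, Finset.sum_div]
        apply Finset.sum_congr rfl
        intro k hk
        rw [mul_zero, zero_add]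
        ring
      rw [this, lt_div_iff₀ hD0]
      linarith
    have hG1 : G 1 < 1 := by
      have : G 1 < ∑ k ∈ Finset.Icc 1 D, P k := by
        apply Finset.sum_lt_sum
        · intro k hk
          have hk1 : (1:ℝ) ≤ (k:ℝ) := by exact_mod_cast (Finset.mem_Icc.mp hk).1
          have hd : 0 < lam * k * 1 + D := hdenpos 1 (by norm_num) k hk
          rw [div_le_iff₀ hd]
          have := hP k hk
          nlinarith
        · refine ⟨k0, hk0S, ?_⟩
          have hd : 0 < lam * k0 * 1 + D := hdenpos 1 (by norm_num) k0 hk0S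
          rw [div_lt_iff₀ hd]
          nlinarith
      linarith [hPsum ▸ this]
    have hmem : (1:ℝ) ∈ Set.Ioo (G 1) (G 0) := ⟨hG1, hG0⟩
    obtain ⟨θ, hθmem, hθeq⟩ := intermediate_value_Ioo' (by norm_num : (0:ℝ) ≤ 1) hcont hmem
    refine ⟨θ, hθmem.1, le_of_lt hθmem.2, ?_⟩
    have hsum : ∑ k ∈ Finset.Icc 1 D, P k * (lam * k * θ) / (lam * k * θ + D)
        = θ * G θ := by
      simp only [hG]
      rw [Finset.mul_sum]
      apply Finset.sum_congr rfl
      intro k hk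
      have hd : 0 < lam * k * θ + D :=
        hdenpos θ ⟨le_of_lt hθmem.1, le_of_lt hθmem.2⟩ k hk
      have hd' := ne_of_gt hd
      field_simp
    rw [hsum, hθeq, mul_one]
end

section
/- Critical threshold for the SIS mean-field dynamics under monophilic (two-hop) contagion: Let D ≥ 1 be a natural number, let P be a probability distribution on {1,…,D}, let Q(k|k') be a conditional degree distribution (Q(k|k') ≥ 0 and ∑_{k=1}^D Q(k|k') = 1 for every k'), and set w(k) = ∑_{k'=1}^D P(k') Q(k|k') (the degree distribution of a random friend Z of a random node). For λ > 0, there exists θ ∈ (0,1] satisfying the stationarity equation θ = ∑_{k=1}^D w(k) · (λ k θ)/(λ k θ + D) if and only if λ · ∑_{k=1}^D k w(k) > D, i.e., if and only if λ exceeds the critical threshold λ*_Z = D / E{d(Z)}. -/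
open Finset

/-- **Critical threshold for the SIS mean-field dynamics under monophilic (two-hop)
contagion.** Let `D ≥ 1`, `P` a probability distribution on `{1,…,D}`, `Q(k|k')` a
conditional degree distribution, and `w(k) = ∑_{k'} P(k') Q(k|k')` the degree distribution
of a random friend of a random node. For `λ > 0`, there exists `θ ∈ (0,1]` with
`θ = ∑_{k=1}^D w(k)·(λkθ)/(λkθ + D)` if and only if `λ·∑_{k=1}^D k w(k) > D`, i.e. iff
`λ` exceeds the critical threshold `λ*_Z = D / E{d(Z)}`. -/
theorem sis_critical_threshold_two_hop (D : ℕ) (hD : 1 ≤ D) (P : ℕ → ℝ)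
    (hP : ∀ k ∈ Finset.Icc 1 D, 0 ≤ P k) (hPsum : ∑ k ∈ Finset.Icc 1 D, P k = 1)
    (Q : ℕ → ℕ → ℝ) (hQ : ∀ k' ∈ Finset.Icc 1 D, ∀ k ∈ Finset.Icc 1 D, 0 ≤ Q k k')
    (hQsum : ∀ k' ∈ Finset.Icc 1 D, ∑ k ∈ Finset.Icc 1 D, Q k k' = 1)
    (w : ℕ → ℝ) (hw : ∀ k, w k = ∑ k' ∈ Finset.Icc 1 D, P k' * Q k k')
    (lam : ℝ) (hlam : 0 < lam) :
    (∃ θ : ℝ, 0 < θ ∧ θ ≤ 1 ∧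
        θ = ∑ k ∈ Finset.Icc 1 D, w k * (lam * k * θ) / (lam * k * θ + D))
      ↔ (D : ℝ) < lam * ∑ k ∈ Finset.Icc 1 D, (k : ℝ) * w k := by
  have hDpos : (0:ℝ) < D := by exact_mod_cast hD
  have hw0 : ∀ k ∈ Finset.Icc 1 D, 0 ≤ w k := fun k hk => by
    rw [hw]
    exact Finset.sum_nonneg fun k' hk' => mul_nonneg (hP k' hk') (hQ k' hk' k hk)
  have hwsum : ∑ k ∈ Finset.Icc 1 D, w k = 1 := by
    simp_rw [hw]
    rw [Finset.sum_comm]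
    calc ∑ k' ∈ Finset.Icc 1 D, ∑ k ∈ Finset.Icc 1 D, P k' * Q k k'
        = ∑ k' ∈ Finset.Icc 1 D, P k' * ∑ k ∈ Finset.Icc 1 D, Q k k' := by
          simp_rw [Finset.mul_sum]
      _ = ∑ k' ∈ Finset.Icc 1 D, P k' := by
          refine Finset.sum_congr rfl fun k' hk' => ?_
          rw [hQsum k' hk', mul_one]
      _ = 1 := hPsum
  set S : ℝ := ∑ k ∈ Finset.Icc 1 D, (k : ℝ) * w k with hS
  obtain ⟨k₀, hk₀s, hk₀⟩ : ∃ k ∈ Finset.Icc 1 D, (0:ℝ) < w k := by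
    have h01 : ∑ k ∈ Finset.Icc 1 D, (0:ℝ) < ∑ k ∈ Finset.Icc 1 D, w k := by
      rw [hwsum, Finset.sum_const_zero]; norm_num
    obtain ⟨k, hk, hk'⟩ := Finset.exists_lt_of_sum_lt h01
    exact ⟨k, hk, hk'⟩
  constructor
  · rintro ⟨θ, hθ0, hθ1, hθeq⟩
    have key : θ < ∑ k ∈ Finset.Icc 1 D, θ * (lam * (k * w k) / D) := by
      conv_lhs => rw [hθeq]
      refine Finset.sum_lt_sum (fun k hk => ?_) ⟨k₀, hk₀s, ?_⟩
      · have hk1 : (1:ℝ) ≤ k := by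
          have := (Finset.mem_Icc.mp hk).1; exact_mod_cast this
        have hge : (0:ℝ) ≤ lam * k * θ := by positivity
        have hnum : 0 ≤ w k * (lam * k * θ) := mul_nonneg (hw0 k hk) hge
        have h1 : w k * (lam * k * θ) / (lam * k * θ + D)
            ≤ w k * (lam * k * θ) / D := by
          apply div_le_div_of_nonneg_left hnum hDpos
          linarith
        calc w k * (lam * k * θ) / (lam * k * θ + D)
            ≤ w k * (lam * k * θ) / D := h1
          _ = θ * (lam * (k * w k) / D) := by ring
      · have hk1 : (1:ℝ) ≤ k₀ := by
          have := (Finset.mem_Icc.mp hk₀s).1; exact_mod_cast this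
        have hgt : (0:ℝ) < lam * k₀ * θ := by positivity
        have hnum : 0 < w k₀ * (lam * k₀ * θ) := mul_pos hk₀ hgt
        have h1 : w k₀ * (lam * k₀ * θ) / (lam * k₀ * θ + D)
            < w k₀ * (lam * k₀ * θ) / D := by
          apply div_lt_div_of_pos_left hnum hDpos
          linarith
        calc w k₀ * (lam * k₀ * θ) / (lam * k₀ * θ + D)
            < w k₀ * (lam * k₀ * θ) / D := h1
          _ = θ * (lam * (k₀ * w k₀) / D) := by ring
    have hsum_eq : ∑ k ∈ Finset.Icc 1 D, θ * (lam * (k * w k) / D)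
        = θ * (lam * S / D) := by
      simp only [hS, Finset.mul_sum, Finset.sum_div]
    rw [hsum_eq] at key
    have key2 : θ * 1 < θ * (lam * S / D) := by rwa [mul_one]
    have h1 : (1:ℝ) < lam * S / D := (mul_lt_mul_iff_right₀ hθ0).mp key2
    rw [lt_div_iff₀ hDpos] at h1
    linarith
  · intro hcrit
    have hSpos : 0 < S := by nlinarith
    set t : ℝ := min 1 ((lam * S - D) / (2 * lam * D)) with ht
    have htpos : 0 < t :=
      lt_min one_pos (div_pos (by linarith) (by positivity))
    have ht1 : t ≤ 1 := min_le_left _ _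
    have htle : t ≤ (lam * S - D) / (2 * lam * D) := min_le_right _ _
    have htB : t * (2 * lam * D) ≤ lam * S - D :=
      (le_div_iff₀ (by positivity)).mp htle
    set F : ℝ → ℝ := fun θ =>
      (∑ k ∈ Finset.Icc 1 D, w k * (lam * k * θ) / (lam * k * θ + D)) - θ with hF
    have hFcont : ContinuousOn F (Set.Icc t 1) := by
      apply ContinuousOn.sub _ continuousOn_id
      apply continuousOn_finset_sum
      intro k hk
      apply ContinuousOn.div (by fun_prop) (by fun_prop)
      intro x hx
      have hx0 : 0 < x := htpos.trans_le hx.1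
      have hge : (0:ℝ) ≤ lam * k * x := by positivity
      nlinarith
    have hden : (0:ℝ) < lam * D * t + D := by positivity
    have hFt : 0 < F t := by
      have step1 : ∑ k ∈ Finset.Icc 1 D, (k : ℝ) * w k * (lam * t / (lam * D * t + D))
          ≤ ∑ k ∈ Finset.Icc 1 D, w k * (lam * k * t) / (lam * k * t + D) := by
        refine Finset.sum_le_sum fun k hk => ?_
        have hkD : (k:ℝ) ≤ D := by exact_mod_cast (Finset.mem_Icc.mp hk).2
        have hk1 : (1:ℝ) ≤ k := by exact_mod_cast (Finset.mem_Icc.mp hk).1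
        have hge : (0:ℝ) ≤ lam * k * t := by positivity
        have hnum : 0 ≤ w k * (lam * k * t) := mul_nonneg (hw0 k hk) hge
        have hden2 : (0:ℝ) < lam * k * t + D := by positivity
        have h2 : w k * (lam * k * t) / (lam * D * t + D)
            ≤ w k * (lam * k * t) / (lam * k * t + D) := by
          apply div_le_div_of_nonneg_left hnum hden2
          nlinarith
        calc (k : ℝ) * w k * (lam * t / (lam * D * t + D))
            = w k * (lam * k * t) / (lam * D * t + D) := by ring
          _ ≤ _ := h2
      have step2 : t < ∑ k ∈ Finset.Icc 1 D, (k : ℝ) * w k * (lam * t / (lam * D * t + D)) := by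
        rw [← Finset.sum_mul, ← hS, ← mul_div_assoc, lt_div_iff₀ hden]
        have hp1 : 0 < t * (lam * S - D) := mul_pos htpos (by linarith)
        nlinarith [mul_le_mul_of_nonneg_left htB htpos.le]
      have : t < ∑ k ∈ Finset.Icc 1 D, w k * (lam * k * t) / (lam * k * t + D) :=
        lt_of_lt_of_le step2 step1
      simp only [hF]
      linarith
    have hF1 : F 1 ≤ 0 := by
      have step : ∑ k ∈ Finset.Icc 1 D, w k * (lam * k * 1) / (lam * k * 1 + D)
          ≤ ∑ k ∈ Finset.Icc 1 D, w k := by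
        refine Finset.sum_le_sum fun k hk => ?_
        have hk1 : (1:ℝ) ≤ k := by exact_mod_cast (Finset.mem_Icc.mp hk).1
        have hden2 : (0:ℝ) < lam * k * 1 + D := by positivity
        rw [div_le_iff₀ hden2]
        have := hw0 k hk
        nlinarith
      simp only [hF]
      rw [hwsum] at step
      linarith
    obtain ⟨θ, hθmem, hθeq⟩ := intermediate_value_Icc' ht1 hFcont ⟨hF1, hFt.le⟩
    refine ⟨θ, htpos.trans_le hθmem.1, hθmem.2, ?_⟩
    simp only [hF] at hθeq
    linarith [hθeq]
end

section
/- Ordering of critical thresholds (monophilic contagion spreads more easily): For a finite simple undirected graph G=(V,E) in which every vertex has degree at least 1 and with maximum degree D, the critical thresholds λ*_Z = D / E{d(Z)} and λ*_X = D / E{d(X)} of the SIS mean-field dynamics under monophilic and non-monophilic contagion respectively satisfy λ*_Z ≤ λ*_X. -/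
lemma amgm_two {a b : ℝ} (ha : 0 < a) (hb : 0 < b) : 2 ≤ a / b + b / a := by
  rw [div_add_div _ _ hb.ne' ha.ne', le_div_iff₀ (mul_pos hb ha)]
  nlinarith [sq_nonneg (a - b)]

/-- **Ordering of critical thresholds (monophilic contagion spreads more easily).** For a
finite simple undirected graph in which every vertex has degree at least 1 and with
maximum degree `D`, the critical thresholds `λ*_Z = D/E{d(Z)}` (monophilic) and
`λ*_X = D/E{d(X)}` (non-monophilic) satisfy `λ*_Z ≤ λ*_X`, where
`E{d(X)} = (1/M)∑_v d(v)` and `E{d(Z)} = (1/M)∑_v (1/d(v)) ∑_{u∈N(v)} d(u)`. -/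
theorem critical_threshold_ordering {V : Type*} [Fintype V] [Nonempty V]
    (G : SimpleGraph V) [DecidableRel G.Adj] (hdeg : ∀ v, 1 ≤ G.degree v) :
    (G.maxDegree : ℝ) /
        ((1 / (Fintype.card V : ℝ)) *
          ∑ v, (1 / (G.degree v : ℝ)) * ∑ u ∈ G.neighborFinset v, (G.degree u : ℝ))
      ≤ (G.maxDegree : ℝ) /
        ((1 / (Fintype.card V : ℝ)) * ∑ v, (G.degree v : ℝ)) := by
  have hM : (0:ℝ) < Fintype.card V := by
    exact_mod_cast Fintype.card_pos
  have hd : ∀ v, (0:ℝ) < G.degree v := fun v => by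
    exact_mod_cast lt_of_lt_of_le zero_lt_one (by exact_mod_cast hdeg v)
  -- rewrite inner sums as if-sums over univ
  have hform : ∀ g : V → V → ℝ,
      (∑ v, ∑ u ∈ G.neighborFinset v, g v u)
        = ∑ v, ∑ u, if G.Adj v u then g v u else 0 := by
    intro g
    refine Finset.sum_congr rfl fun v _ => ?_
    rw [SimpleGraph.neighborFinset_eq_filter, Finset.sum_filter]
  have hsym : ∀ g : V → V → ℝ,
      (∑ v, ∑ u ∈ G.neighborFinset v, g v u)
        = ∑ v, ∑ u ∈ G.neighborFinset v, g u v := by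
    intro g
    rw [hform, hform, Finset.sum_comm]
    refine Finset.sum_congr rfl fun v _ => Finset.sum_congr rfl fun u _ => ?_
    exact if_congr (G.adj_comm u v) rfl rfl
  set S : ℝ := ∑ v, (1 / (G.degree v : ℝ)) * ∑ u ∈ G.neighborFinset v, (G.degree u : ℝ)
    with hS
  have hSform : S = ∑ v, ∑ u ∈ G.neighborFinset v, (G.degree u : ℝ) / (G.degree v : ℝ) := by
    rw [hS]
    refine Finset.sum_congr rfl fun v _ => ?_
    rw [Finset.mul_sum]
    exact Finset.sum_congr rfl fun u _ => by ring
  have hkey : (∑ v, (G.degree v : ℝ)) ≤ S := by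
    have h2 : 2 * S = ∑ v, ∑ u ∈ G.neighborFinset v,
        ((G.degree u : ℝ) / (G.degree v : ℝ) + (G.degree v : ℝ) / (G.degree u : ℝ)) := by
      have := hsym (fun v u => (G.degree u : ℝ) / (G.degree v : ℝ))
      simp only [Finset.sum_add_distrib]
      rw [← this, ← hSform]
      ring
    have h3 : ∑ v, ∑ u ∈ G.neighborFinset v, (2:ℝ) ≤ 2 * S := by
      rw [h2]
      refine Finset.sum_le_sum fun v _ => Finset.sum_le_sum fun u _ => ?_
      exact amgm_two (hd u) (hd v)
    have h4 : (∑ v, ∑ u ∈ G.neighborFinset v, (2:ℝ)) = 2 * ∑ v, (G.degree v : ℝ) := by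
      simp [Finset.sum_const, SimpleGraph.card_neighborFinset_eq_degree, Finset.mul_sum,
        mul_comm]
    linarith
  have hTpos : (0:ℝ) < (1 / (Fintype.card V : ℝ)) * ∑ v, (G.degree v : ℝ) := by
    apply mul_pos (by positivity)
    exact Finset.sum_pos (fun v _ => hd v) Finset.univ_nonempty
  exact div_le_div_of_nonneg_left (by positivity) hTpos
    (mul_le_mul_of_nonneg_left hkey (by positivity))
end

section
/- Variance of the random-walk NEP estimate (Theorem on variance): For a finite simple undirected graph G=(V,E) in which every vertex has degree at least 1 and any labeling s : V → ℝ, the variance of q(Y) for a uniformly random end Y of a uniformly random edge equals the covariance of s(Y) and q(U) for a uniformly random directed edge (U,Y). Explicitly, writing E = 2|E(G)| for the number of directed edges, (∑_{v} d(v) q(v)²)/E − ((∑_{v} d(v) q(v))/E)² = (∑_{(u,v): u∼v} s(v) q(u))/E − ((∑_v d(v) s(v))/E)·((∑_u d(u) q(u))/E), where the middle sum ranges over ordered pairs of adjacent vertices. -/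
/-- **Variance of the random-walk NEP estimate.** For a finite simple undirected graph in
which every vertex has degree at least 1 and any labeling `s : V → ℝ`, with
`q(v) = (1/d(v))∑_{u∈N(v)} s(u)` and `E = 2|E(G)|` the number of directed edges, the
variance of `q(Y)` for a uniformly random end `Y` of a uniformly random edge equals the
covariance of `s(Y)` and `q(U)` for a uniformly random directed edge `(U,Y)`:
`(∑_v d(v)q(v)²)/E − ((∑_v d(v)q(v))/E)² = (∑_{(u,v):u∼v} s(v)q(u))/E −
((∑_v d(v)s(v))/E)·((∑_u d(u)q(u))/E)`. -/
theorem rw_nep_variance {V : Type*} [Fintype V] [DecidableEq V] (G : SimpleGraph V)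
    [DecidableRel G.Adj] (hdeg : ∀ v, 1 ≤ G.degree v) (s : V → ℝ)
    (q : V → ℝ) (hq : ∀ v, q v = (∑ u ∈ G.neighborFinset v, s u) / (G.degree v : ℝ)) :
    (∑ v, (G.degree v : ℝ) * q v ^ 2) / (2 * (G.edgeFinset.card : ℝ))
        - ((∑ v, (G.degree v : ℝ) * q v) / (2 * (G.edgeFinset.card : ℝ))) ^ 2
      = (∑ u, ∑ v ∈ G.neighborFinset u, s v * q u) / (2 * (G.edgeFinset.card : ℝ))
        - ((∑ v, (G.degree v : ℝ) * s v) / (2 * (G.edgeFinset.card : ℝ)))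
          * ((∑ u, (G.degree u : ℝ) * q u) / (2 * (G.edgeFinset.card : ℝ))) := by
  have hd : ∀ v, ((G.degree v : ℝ)) ≠ 0 := by
    intro v
    have := hdeg v
    positivity
  have hdq : ∀ v, (G.degree v : ℝ) * q v = ∑ u ∈ G.neighborFinset v, s u := by
    intro v
    rw [hq v, mul_div_cancel₀ _ (hd v)]
  have key : ∑ u, ∑ v ∈ G.neighborFinset u, s v = ∑ v, (G.degree v : ℝ) * s v := by
    simp_rw [SimpleGraph.neighborFinset_eq_filter, Finset.sum_filter]
    rw [Finset.sum_comm]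
    refine Finset.sum_congr rfl fun v _ => ?_
    simp_rw [G.adj_comm]
    rw [← Finset.sum_filter, ← SimpleGraph.neighborFinset_eq_filter, Finset.sum_const,
      nsmul_eq_mul, SimpleGraph.card_neighborFinset_eq_degree]
  have h1 : ∑ u, ∑ v ∈ G.neighborFinset u, s v * q u
      = ∑ v, (G.degree v : ℝ) * q v ^ 2 := by
    refine Finset.sum_congr rfl fun u _ => ?_
    rw [← Finset.sum_mul, ← hdq u]
    ring
  have h2 : ∑ v, (G.degree v : ℝ) * s v = ∑ u, (G.degree u : ℝ) * q u := by
    simp_rw [hdq]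
    exact key.symm
  rw [h1, h2, sq]
end

section
/- Efficiency of random-walk NEP over intent polling under zero degree–label correlation (Corollary, part 2): Let G=(V,E) be a finite simple undirected graph in which every vertex has degree at least 1, and let s : V → {0,1} be a labeling with f̄ = (1/M)∑_v s(v). If s(X) and d(X) are uncorrelated, i.e., (1/M)∑_v s(v)d(v) = f̄·((1/M)∑_v d(v)), then Cov{s(Y), q(U)} ≤ f̄(1 − f̄), i.e., the per-sample variance of the random-walk NEP estimate is at most the per-sample variance f̄(1−f̄) = Var{s(X)} of intent polling; consequently, for any budget b ≥ 1, MSE{T_RW} = (1/b)·Cov{s(Y), q(U)} ≤ (1/b)·f̄(1−f̄) = MSE{I}. -/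
/-- **Efficiency of random-walk NEP over intent polling under zero degree–label
correlation.** For a finite simple undirected graph in which every vertex has degree at
least 1 and a binary labeling `s : V → {0,1}` with `f̄ = (1/M)∑_v s(v)`, if `s(X)` and
`d(X)` are uncorrelated then the per-sample variance
`Cov{s(Y),q(U)} = (∑_{(u,v):u∼v} s(v)q(u))/(2|E|) −
((∑_v d(v)s(v))/(2|E|))·((∑_u d(u)q(u))/(2|E|))` of the random-walk NEP estimate is at
most the per-sample variance `f̄(1−f̄)` of intent polling; consequently, for any budget
`b ≥ 1`, `MSE{T_RW} = (1/b)·Cov{s(Y),q(U)} ≤ (1/b)·f̄(1−f̄) = MSE{I}`. -/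
theorem rw_nep_more_efficient_than_intent {V : Type*} [Fintype V] [DecidableEq V]
    (G : SimpleGraph V) [DecidableRel G.Adj] (hdeg : ∀ v, 1 ≤ G.degree v)
    (s : V → ℝ) (hs : ∀ v, s v = 0 ∨ s v = 1)
    (q : V → ℝ) (hq : ∀ v, q v = (∑ u ∈ G.neighborFinset v, s u) / (G.degree v : ℝ))
    (fbar : ℝ) (hfbar : fbar = (1 / (Fintype.card V : ℝ)) * ∑ v, s v)
    (huncorr : (1 / (Fintype.card V : ℝ)) * ∑ v, s v * (G.degree v : ℝ)
      = fbar * ((1 / (Fintype.card V : ℝ)) * ∑ v, (G.degree v : ℝ))) :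
    ((∑ u, ∑ v ∈ G.neighborFinset u, s v * q u) / (2 * (G.edgeFinset.card : ℝ))
        - ((∑ v, (G.degree v : ℝ) * s v) / (2 * (G.edgeFinset.card : ℝ)))
          * ((∑ u, (G.degree u : ℝ) * q u) / (2 * (G.edgeFinset.card : ℝ))))
      ≤ fbar * (1 - fbar)
    ∧ ∀ b : ℕ, 1 ≤ b →
      (1 / (b : ℝ)) *
        ((∑ u, ∑ v ∈ G.neighborFinset u, s v * q u) / (2 * (G.edgeFinset.card : ℝ))
          - ((∑ v, (G.degree v : ℝ) * s v) / (2 * (G.edgeFinset.card : ℝ)))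
            * ((∑ u, (G.degree u : ℝ) * q u) / (2 * (G.edgeFinset.card : ℝ))))
        ≤ (1 / (b : ℝ)) * (fbar * (1 - fbar)) := by
  have main : ((∑ u, ∑ v ∈ G.neighborFinset u, s v * q u) / (2 * (G.edgeFinset.card : ℝ))
        - ((∑ v, (G.degree v : ℝ) * s v) / (2 * (G.edgeFinset.card : ℝ)))
          * ((∑ u, (G.degree u : ℝ) * q u) / (2 * (G.edgeFinset.card : ℝ))))
      ≤ fbar * (1 - fbar) := by
    rcases isEmpty_or_nonempty V with hV | hV
    · subst hfbar
      simp
    · have hM : (0:ℝ) < Fintype.card V := by exact_mod_cast Fintype.card_pos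
      have hdeg0 : ∀ v, (0:ℝ) < G.degree v := fun v => by exact_mod_cast hdeg v
      have hs01 : ∀ v, 0 ≤ s v ∧ s v ≤ 1 := fun v => by
        rcases hs v with h | h <;> simp [h]
      have h1 : ∀ u, (∑ v ∈ G.neighborFinset u, s v) = (G.degree u : ℝ) * q u := by
        intro u
        rw [hq u, mul_comm]
        exact (div_mul_cancel₀ _ (hdeg0 u).ne').symm
      have hqrange : ∀ u, 0 ≤ q u ∧ q u ≤ 1 := by
        intro u
        rw [hq u]
        constructor
        · exact div_nonneg (Finset.sum_nonneg fun v _ => (hs01 v).1) (hdeg0 u).le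
        · rw [div_le_one (hdeg0 u)]
          calc ∑ v ∈ G.neighborFinset u, s v
              ≤ ∑ v ∈ G.neighborFinset u, 1 :=
                Finset.sum_le_sum fun v _ => (hs01 v).2
            _ = (G.degree u : ℝ) := by
                simp [G.card_neighborFinset_eq_degree]
      have hE : (∑ v, (G.degree v : ℝ)) = 2 * (G.edgeFinset.card : ℝ) := by
        have := G.sum_degrees_eq_twice_card_edges
        exact_mod_cast congrArg (Nat.cast : ℕ → ℝ) this
      have hE2pos : (0:ℝ) < 2 * (G.edgeFinset.card : ℝ) := by
        rw [← hE]
        exact Finset.sum_pos (fun v _ => hdeg0 v) Finset.univ_nonempty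
      have hA : (∑ u, (G.degree u : ℝ) * q u) = ∑ v, (G.degree v : ℝ) * s v := by
        calc (∑ u, (G.degree u : ℝ) * q u)
            = ∑ u, ∑ v ∈ G.neighborFinset u, s v :=
              Finset.sum_congr rfl fun u _ => (h1 u).symm
          _ = ∑ v, ∑ u ∈ G.neighborFinset v, s v := by
              refine Finset.sum_comm' ?_
              intro u v
              simp [SimpleGraph.mem_neighborFinset, G.adj_comm, and_comm]
          _ = ∑ v, (G.degree v : ℝ) * s v := by
              refine Finset.sum_congr rfl fun v _ => ?_
              rw [Finset.sum_const, G.card_neighborFinset_eq_degree, nsmul_eq_mul]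
      have huncorr' : (∑ v, (G.degree v : ℝ) * s v) = fbar * (2 * (G.edgeFinset.card : ℝ)) := by
        have h2 : (1 / (Fintype.card V : ℝ)) * ∑ v, s v * (G.degree v : ℝ)
            = (1 / (Fintype.card V : ℝ)) * (fbar * ∑ v, (G.degree v : ℝ)) := by
          rw [huncorr]; ring
        have h3 : (∑ v, s v * (G.degree v : ℝ)) = fbar * ∑ v, (G.degree v : ℝ) :=
          mul_left_cancel₀ (one_div_ne_zero hM.ne') h2
        calc (∑ v, (G.degree v : ℝ) * s v) = ∑ v, s v * (G.degree v : ℝ) := by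
              simp [mul_comm]
          _ = fbar * ∑ v, (G.degree v : ℝ) := h3
          _ = fbar * (2 * (G.edgeFinset.card : ℝ)) := by rw [hE]
      have hfirst : (∑ u, ∑ v ∈ G.neighborFinset u, s v * q u)
          = ∑ u, (G.degree u : ℝ) * q u * q u := by
        refine Finset.sum_congr rfl fun u _ => ?_
        rw [← Finset.sum_mul, h1]
      have hle : (∑ u, (G.degree u : ℝ) * q u * q u) ≤ ∑ u, (G.degree u : ℝ) * q u := by
        refine Finset.sum_le_sum fun u _ => ?_
        have h0 := (hqrange u).1
        have h1' := (hqrange u).2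
        nlinarith [mul_nonneg (mul_nonneg (hdeg0 u).le h0) (sub_nonneg.mpr h1')]
      have key : (∑ u, (G.degree u : ℝ) * q u * q u) ≤ fbar * (2 * (G.edgeFinset.card : ℝ)) := by
        calc (∑ u, (G.degree u : ℝ) * q u * q u) ≤ ∑ u, (G.degree u : ℝ) * q u := hle
          _ = ∑ v, (G.degree v : ℝ) * s v := hA
          _ = fbar * (2 * (G.edgeFinset.card : ℝ)) := huncorr'
      have hdivle : (∑ u, (G.degree u : ℝ) * q u * q u) / (2 * (G.edgeFinset.card : ℝ)) ≤ fbar := by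
        rw [div_le_iff₀ hE2pos]
        exact key
      have hcancel : fbar * (2 * (G.edgeFinset.card : ℝ)) / (2 * (G.edgeFinset.card : ℝ)) = fbar :=
        mul_div_cancel_right₀ fbar hE2pos.ne'
      rw [hfirst, hA, huncorr', hcancel]
      nlinarith [hdivle]
  refine ⟨main, fun b hb => ?_⟩
  have hb0 : (0:ℝ) ≤ 1 / (b : ℝ) := by positivity
  exact mul_le_mul_of_nonneg_left main hb0
end

section
/- Biased MSE comparison for budget one (Theorem on small sampling budgets): Let G=(V,E) be a finite simple undirected graph in which every vertex has degree at least 1, and let s : V → {0,1} be a labeling with both labels present; set f̄ = (1/M)∑_v s(v), let a = (∑_v s(v)d(v))/(∑_v d(v)) = E{s(Y)}, and let V_RW = Cov{s(Y), q(U)} = (∑_u d(u)q(u)²)/(∑_u d(u)) − a². Suppose either (i) the mean degree of label-1 vertices is at most the mean degree of label-0 vertices and f̄ ≤ 1/2, or (ii) the mean degree of label-1 vertices is at least the mean degree of label-0 vertices and f̄ ≥ 1/2. Then the single-sample random-walk NEP estimate has mean squared error at most that of single-sample intent polling: (a − f̄)² + V_RW ≤ f̄(1 − f̄). -/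
open Finset
open scoped Classical

/-- **Biased MSE comparison for budget one.** For a finite simple undirected graph in
which every vertex has degree at least 1 and a binary labeling `s : V → {0,1}` with both
labels present, set `f̄ = (1/M)∑_v s(v)`, `a = (∑_v s(v)d(v))/(∑_v d(v)) = E{s(Y)}` and
`V_RW = (∑_u d(u)q(u)²)/(∑_u d(u)) − a² = Cov{s(Y),q(U)}`.  If either (i) the mean degree
of label-1 vertices is at most that of label-0 vertices and `f̄ ≤ 1/2`, or (ii) the mean
degree of label-1 vertices is at least that of label-0 vertices and `f̄ ≥ 1/2`, then the
single-sample random-walk NEP estimate beats single-sample intent polling in MSE: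
`(a − f̄)² + V_RW ≤ f̄(1 − f̄)`. -/
theorem biased_mse_budget_one {V : Type*} [Fintype V] (G : SimpleGraph V)
    [DecidableRel G.Adj] (hdeg : ∀ v, 1 ≤ G.degree v)
    (s : V → ℝ) (hs : ∀ v, s v = 0 ∨ s v = 1)
    (h1 : ∃ v, s v = 1) (h0 : ∃ v, s v = 0)
    (q : V → ℝ) (hq : ∀ v, q v = (∑ u ∈ G.neighborFinset v, s u) / (G.degree v : ℝ))
    (fbar a Vrw : ℝ)
    (hfbar : fbar = (1 / (Fintype.card V : ℝ)) * ∑ v, s v)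
    (ha : a = (∑ v, s v * (G.degree v : ℝ)) / (∑ v, (G.degree v : ℝ)))
    (hVrw : Vrw = (∑ u, (G.degree u : ℝ) * q u ^ 2) / (∑ u, (G.degree u : ℝ)) - a ^ 2)
    (hcase :
      ((∑ v ∈ univ.filter fun v => s v = 1, (G.degree v : ℝ))
            / ((univ.filter fun v => s v = 1).card : ℝ)
          ≤ (∑ v ∈ univ.filter fun v => s v = 0, (G.degree v : ℝ))
            / ((univ.filter fun v => s v = 0).card : ℝ)
        ∧ fbar ≤ 1 / 2)
      ∨ ((∑ v ∈ univ.filter fun v => s v = 0, (G.degree v : ℝ))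
            / ((univ.filter fun v => s v = 0).card : ℝ)
          ≤ (∑ v ∈ univ.filter fun v => s v = 1, (G.degree v : ℝ))
            / ((univ.filter fun v => s v = 1).card : ℝ)
        ∧ 1 / 2 ≤ fbar)) :
    (a - fbar) ^ 2 + Vrw ≤ fbar * (1 - fbar) := by
  classical
  haveI : Nonempty V := ⟨h1.choose⟩
  set D : ℝ := ∑ v, (G.degree v : ℝ) with hD
  have hMpos : 0 < (Fintype.card V : ℝ) := by exact_mod_cast Fintype.card_pos
  have hdpos : ∀ v, (0 : ℝ) < (G.degree v : ℝ) := by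
    intro v; exact_mod_cast Nat.lt_of_lt_of_le Nat.zero_lt_one (hdeg v)
  have hDpos : 0 < D := by
    rw [hD]; exact Finset.sum_pos (fun v _ => hdpos v) univ_nonempty
  -- q bounds
  have hq0 : ∀ v, 0 ≤ q v := by
    intro v; rw [hq v]
    apply div_nonneg _ (hdpos v).le
    exact Finset.sum_nonneg fun u _ => by rcases hs u with h | h <;> simp [h]
  have hq1 : ∀ v, q v ≤ 1 := by
    intro v; rw [hq v, div_le_one (hdpos v)]
    calc (∑ u ∈ G.neighborFinset v, s u) ≤ ∑ u ∈ G.neighborFinset v, 1 := by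
          exact Finset.sum_le_sum fun u _ => by rcases hs u with h | h <;> simp [h]
      _ = (G.degree v : ℝ) := by
          simp [SimpleGraph.card_neighborFinset_eq_degree]
  have hdq : ∀ v, (G.degree v : ℝ) * q v = ∑ u ∈ G.neighborFinset v, s u := by
    intro v; rw [hq v, mul_comm, div_mul_cancel₀ _ (ne_of_gt (hdpos v))]
  -- handshake
  have hswap : (∑ v, ∑ u ∈ G.neighborFinset v, s u) = ∑ v, s v * (G.degree v : ℝ) := by
    have e1 : ∀ v : V, (∑ u ∈ G.neighborFinset v, s u) = ∑ u, if G.Adj v u then s u else 0 := by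
      intro v
      rw [SimpleGraph.neighborFinset_eq_filter, Finset.sum_filter]
    have e2 : ∀ u : V, (∑ v, if G.Adj v u then s u else 0) = s u * (G.degree u : ℝ) := by
      intro u
      rw [← Finset.sum_filter]
      rw [Finset.sum_const]
      have : (univ.filter fun v => G.Adj v u) = G.neighborFinset u := by
        ext v; simp [SimpleGraph.adj_comm]
      rw [this, SimpleGraph.card_neighborFinset_eq_degree]
      simp [mul_comm]
    calc (∑ v, ∑ u ∈ G.neighborFinset v, s u)
        = ∑ v, ∑ u, if G.Adj v u then s u else 0 := by
          exact Finset.sum_congr rfl fun v _ => e1 v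
      _ = ∑ u, ∑ v, if G.Adj v u then s u else 0 := Finset.sum_comm
      _ = ∑ u, s u * (G.degree u : ℝ) := Finset.sum_congr rfl fun u _ => e2 u
  have hsum_dq : (∑ v, (G.degree v : ℝ) * q v) = a * D := by
    rw [ha]
    rw [div_mul_cancel₀ _ (ne_of_gt hDpos)]
    rw [← hswap]
    exact Finset.sum_congr rfl fun v _ => hdq v
  -- Vrw bound
  have hV : Vrw ≤ a - a ^ 2 := by
    rw [hVrw]
    have hle : (∑ u, (G.degree u : ℝ) * q u ^ 2) ≤ ∑ u, (G.degree u : ℝ) * q u := by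
      apply Finset.sum_le_sum
      intro v _
      have h0 := hq0 v; have h1' := hq1 v; have hd := (hdpos v).le
      have hqq : q v ^ 2 ≤ q v := by nlinarith
      exact mul_le_mul_of_nonneg_left hqq hd
    have : (∑ u, (G.degree u : ℝ) * q u ^ 2) / D ≤ a := by
      rw [div_le_iff₀ hDpos]
      calc (∑ u, (G.degree u : ℝ) * q u ^ 2) ≤ ∑ u, (G.degree u : ℝ) * q u := hle
        _ = a * D := hsum_dq
    linarith
  -- class decomposition
  set A1 := univ.filter fun v => s v = 1 with hA1
  set A0 := univ.filter fun v => s v = 0 with hA0def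
  have hA0 : A0 = univ.filter fun v => ¬ s v = 1 := by
    rw [hA0def]; ext v
    rcases hs v with h | h <;> simp [h]
  set n1 : ℝ := (A1.card : ℝ) with hn1def
  set n0 : ℝ := (A0.card : ℝ) with hn0def
  set S1 : ℝ := ∑ v ∈ A1, (G.degree v : ℝ) with hS1def
  set S0 : ℝ := ∑ v ∈ A0, (G.degree v : ℝ) with hS0def
  have hn1pos : 0 < n1 := by
    rw [hn1def]
    have : A1.Nonempty := ⟨h1.choose, by simp [hA1, h1.choose_spec]⟩
    exact_mod_cast Finset.card_pos.mpr this
  have hn0pos : 0 < n0 := by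
    rw [hn0def]
    have : A0.Nonempty := ⟨h0.choose, by simp [hA0def, h0.choose_spec]⟩
    exact_mod_cast Finset.card_pos.mpr this
  have hsplit : ∀ g : V → ℝ, (∑ v, s v * g v) = ∑ v ∈ A1, g v := by
    intro g
    rw [← Finset.sum_filter_add_sum_filter_not univ (fun v => s v = 1) (fun v => s v * g v)]
    have e1 : (∑ v ∈ A1, s v * g v) = ∑ v ∈ A1, g v := by
      apply Finset.sum_congr rfl
      intro v hv
      have : s v = 1 := by simpa [hA1] using hv
      rw [this, one_mul]
    have e2 : (∑ v ∈ univ.filter fun v => ¬ s v = 1, s v * g v) = 0 := by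
      apply Finset.sum_eq_zero
      intro v hv
      have hv' : ¬ s v = 1 := by simpa using (Finset.mem_filter.mp hv).2
      have : s v = 0 := (hs v).resolve_right hv'
      rw [this, zero_mul]
    rw [e1, e2, add_zero]
  have hM : (Fintype.card V : ℝ) = n1 + n0 := by
    rw [hn1def, hn0def, hA0]
    have hc : A1.card + (univ.filter fun v => ¬ s v = 1).card = Fintype.card V := by
      rw [← Finset.card_univ]
      exact Finset.card_filter_add_card_filter_not (s := (univ : Finset V))
        (p := fun v => s v = 1)
    exact_mod_cast hc.symm
  have hfbar' : fbar = n1 / (n1 + n0) := by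
    have hsum1 : (∑ v, s v) = n1 := by
      have := hsplit (fun _ => 1)
      simpa [hn1def] using this
    rw [hfbar, hsum1, hM]
    ring
  have hDsum : D = S1 + S0 := by
    rw [hD, hS1def, hS0def, hA0]
    exact (Finset.sum_filter_add_sum_filter_not univ (fun v => s v = 1)
      (fun v => (G.degree v : ℝ))).symm
  have ha' : a = S1 / (S1 + S0) := by
    rw [ha, hsplit (fun v => (G.degree v : ℝ)), ← hS1def, hDsum]
  have hS1pos : 0 ≤ S1 := Finset.sum_nonneg fun v _ => (hdpos v).le
  have hS0pos : 0 ≤ S0 := Finset.sum_nonneg fun v _ => (hdpos v).le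
  have hSsum : 0 < S1 + S0 := by rw [← hDsum]; exact hDpos
  -- key sign fact
  have hkey : (a - fbar) * (1 - 2 * fbar) ≤ 0 := by
    rcases hcase with ⟨hmean, hf⟩ | ⟨hmean, hf⟩
    · -- a ≤ fbar, fbar ≤ 1/2
      have haf : a ≤ fbar := by
        rw [ha', hfbar']
        rw [div_le_div_iff₀ hSsum (by linarith)]
        rw [div_le_div_iff₀ hn1pos hn0pos] at hmean
        calc S1 * (n1 + n0) = S1 * n1 + S1 * n0 := by ring
          _ ≤ S1 * n1 + S0 * n1 := by linarith
          _ = n1 * (S1 + S0) := by ring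
      nlinarith [mul_nonneg (sub_nonneg.mpr haf) (by linarith : (0:ℝ) ≤ 1 - 2 * fbar)]
    · have haf : fbar ≤ a := by
        rw [ha', hfbar']
        rw [div_le_div_iff₀ (by linarith) hSsum]
        rw [div_le_div_iff₀ hn0pos hn1pos] at hmean
        calc n1 * (S1 + S0) = S1 * n1 + S0 * n1 := by ring
          _ ≤ S1 * n1 + S1 * n0 := by linarith
          _ = S1 * (n1 + n0) := by ring
      nlinarith [mul_nonneg (sub_nonneg.mpr haf) (by linarith : (0:ℝ) ≤ 2 * fbar - 1)]
  nlinarith [hV, hkey]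
end
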